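/- Let a be a monic Hurwitz real polynomial of degree n, let b(s) = s^{n-1} + x₁s^{n-2} + ⋯ + x_{n-1} with Re[b(iω)/a(iω)] > 0 for all real ω, and let α(s) = sⁿ + α₁s^{n-1} + ⋯ + αₙ be an arbitrary monic real polynomial of degree n. Then there exists ε₀ > 0 such that for all 0 < ε < ε₀, the degree-n polynomial b̃(s) = b(s) + ε·α(s) satisfies Re[b̃(iω)/a(iω)] > 0 for all real ω, i.e., b̃/a is SPR. -/
import Mathlib


open Polynomial

noncomputable def evalI (p : Polynomial ℝ) (ω : ℝ) : ℂ :=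
  (p.map (algebraMap ℝ ℂ)).eval ((ω : ℂ) * Complex.I)

noncomputable def evalNegI (p : Polynomial ℝ) (ω : ℝ) : ℂ :=
  (p.map (algebraMap ℝ ℂ)).eval (-((ω : ℂ) * Complex.I))

def Hurwitz (p : Polynomial ℝ) : Prop :=
  ∀ z : ℂ, (p.map (algebraMap ℝ ℂ)).eval z = 0 → z.re < 0

lemma evalI_add (p q : Polynomial ℝ) (ω : ℝ) : evalI (p + q) ω = evalI p ω + evalI q ω := by
  simp [evalI]

lemma evalI_sub (p q : Polynomial ℝ) (ω : ℝ) : evalI (p - q) ω = evalI p ω - evalI q ω := by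
  simp [evalI]

lemma evalI_C_mul (c : ℝ) (p : Polynomial ℝ) (ω : ℝ) :
    evalI (Polynomial.C c * p) ω = (c : ℂ) * evalI p ω := by
  simp [evalI]

lemma continuous_evalI (p : Polynomial ℝ) : Continuous (evalI p) := by
  unfold evalI
  exact (Polynomial.continuous _).comp (by continuity)

lemma norm_evalI_le (p : Polynomial ℝ) (m : ℕ) (hm : p.natDegree ≤ m) :
    ∃ C : ℝ, 0 ≤ C ∧ ∀ ω : ℝ, 1 ≤ |ω| → ‖evalI p ω‖ ≤ C * |ω| ^ m := by
  refine ⟨∑ i ∈ Finset.range (p.natDegree + 1), |p.coeff i|,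
    Finset.sum_nonneg fun _ _ => abs_nonneg _, fun ω hω => ?_⟩
  have h1 : evalI p ω = ∑ i ∈ Finset.range (p.natDegree + 1),
      (p.coeff i : ℂ) * ((ω : ℂ) * Complex.I) ^ i := by
    rw [evalI, eval_map, eval₂_eq_sum_range]
    simp [Complex.coe_algebraMap]
  rw [h1]
  refine (norm_sum_le _ _).trans ?_
  rw [Finset.sum_mul]
  refine Finset.sum_le_sum fun i hi => ?_
  have hi' : i ≤ m := (Nat.lt_succ_iff.mp (Finset.mem_range.mp hi)).trans hm
  have : ‖(p.coeff i : ℂ) * ((ω : ℂ) * Complex.I) ^ i‖ = |p.coeff i| * |ω| ^ i := by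
    simp [norm_mul, norm_pow, Complex.norm_real]
  rw [this]
  exact mul_le_mul_of_nonneg_left (pow_le_pow_right₀ hω hi') (abs_nonneg _)
open Polynomial

lemma natDegree_sub_of_monic {p q : Polynomial ℝ} {n : ℕ} (hp : p.Monic) (hq : q.Monic)
    (hpn : p.natDegree = n) (hqn : q.natDegree = n) : (p - q).natDegree ≤ n - 1 := by
  rw [Polynomial.natDegree_le_iff_coeff_eq_zero]
  intro m hm
  have hmn : n ≤ m := by omega
  rcases eq_or_lt_of_le hmn with h | h
  · have h1 : p.coeff n = 1 := hpn ▸ hp.coeff_natDegree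
    have h2 : q.coeff n = 1 := hqn ▸ hq.coeff_natDegree
    rw [Polynomial.coeff_sub, ← h, h1, h2, sub_self]
  · rw [Polynomial.coeff_sub, Polynomial.coeff_eq_zero_of_natDegree_lt (hpn ▸ h),
      Polynomial.coeff_eq_zero_of_natDegree_lt (hqn ▸ h), sub_zero]

lemma key_large {n : ℕ} (hn : 1 ≤ n) {a : Polynomial ℝ} (hmona : a.Monic)
    (hdega : a.natDegree = n) {d : Polynomial ℝ} (hd : d.natDegree ≤ n - 1) :
    ∃ R : ℝ, 1 ≤ R ∧ ∀ ω : ℝ, R ≤ |ω| → 2 * ‖evalI d ω‖ < ‖evalI a ω‖ := by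
  obtain ⟨C₁, hC₁0, hC₁⟩ := norm_evalI_le (a - X ^ n) (n - 1)
    (natDegree_sub_of_monic hmona (monic_X_pow n) hdega (natDegree_X_pow n))
  obtain ⟨C₂, hC₂0, hC₂⟩ := norm_evalI_le d (n - 1) hd
  refine ⟨max 1 (C₁ + 2 * C₂ + 1), le_max_left _ _, fun ω hω => ?_⟩
  have hω1 : 1 ≤ |ω| := le_trans (le_max_left _ _) hω
  have hω2 : C₁ + 2 * C₂ + 1 ≤ |ω| := le_trans (le_max_right _ _) hω
  have hpow : (1 : ℝ) ≤ |ω| ^ (n - 1) := one_le_pow₀ hω1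
  have hXn : evalI (X ^ n : Polynomial ℝ) ω = ((ω : ℂ) * Complex.I) ^ n := by
    simp [evalI]
  have hXnnorm : ‖evalI (X ^ n : Polynomial ℝ) ω‖ = |ω| ^ n := by
    rw [hXn, norm_pow, norm_mul, Complex.norm_real, Complex.norm_I, mul_one, Real.norm_eq_abs]
  have ha_eq : a = X ^ n + (a - X ^ n) := by ring
  have hlow : |ω| ^ (n - 1) * (|ω| - C₁) ≤ ‖evalI a ω‖ := by
    have h1 : ‖evalI (X ^ n : Polynomial ℝ) ω‖ - ‖evalI (a - X ^ n) ω‖ ≤ ‖evalI a ω‖ := by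
      calc ‖evalI (X ^ n : Polynomial ℝ) ω‖ - ‖evalI (a - X ^ n) ω‖
          ≤ ‖evalI (X ^ n : Polynomial ℝ) ω + evalI (a - X ^ n) ω‖ :=
            by
            have := norm_add_le (evalI (X ^ n : Polynomial ℝ) ω + evalI (a - X ^ n) ω) (-(evalI (a - X ^ n) ω))
            simp only [add_neg_cancel_right, norm_neg] at this
            linarith
        _ = ‖evalI a ω‖ := by rw [← evalI_add]; congr 1; ring
    have h2 : ‖evalI (a - X ^ n) ω‖ ≤ C₁ * |ω| ^ (n - 1) := hC₁ ω hω1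
    have h3 : |ω| ^ n = |ω| ^ (n - 1) * |ω| := by
      rw [← pow_succ]
      congr 1
      omega
    rw [hXnnorm, h3] at h1
    nlinarith
  have hub : 2 * ‖evalI d ω‖ ≤ 2 * C₂ * |ω| ^ (n - 1) := by
    have := hC₂ ω hω1
    linarith
  nlinarith

lemma evalI_a_ne_zero {a : Polynomial ℝ} (ha : Hurwitz a) (ω : ℝ) : evalI a ω ≠ 0 := by
  intro h
  have := ha _ h
  simp at this

/-- From a point of the weak SPR region one constructs a point of the SPR
region: if b/a is WSPR and α is any monic degree-n polynomial, then for all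
sufficiently small ε > 0, (b + ε·α)/a is SPR. -/
theorem stmt17 (n : ℕ) (hn : 1 ≤ n) (a b α : Polynomial ℝ) (ha : Hurwitz a)
    (hmona : a.Monic) (hdega : a.natDegree = n)
    (hmonb : b.Monic) (hdegb : b.natDegree = n - 1)
    (hmonα : α.Monic) (hdegα : α.natDegree = n)
    (hwspr : ∀ ω : ℝ, 0 < (evalI b ω / evalI a ω).re) :
    ∃ ε₀ : ℝ, 0 < ε₀ ∧ ∀ ε : ℝ, 0 < ε → ε < ε₀ →
      ∀ ω : ℝ, 0 < (evalI (b + Polynomial.C ε * α) ω / evalI a ω).re := by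
  have hane : ∀ ω : ℝ, evalI a ω ≠ 0 := evalI_a_ne_zero ha
  set f : ℝ → ℝ := fun ω => (evalI b ω / evalI a ω).re with hf
  set g : ℝ → ℝ := fun ω => (evalI α ω / evalI a ω).re with hg
  have hcf : Continuous f := Complex.continuous_re.comp
    ((continuous_evalI b).div (continuous_evalI a) hane)
  have hcg : Continuous g := Complex.continuous_re.comp
    ((continuous_evalI α).div (continuous_evalI a) hane)
  obtain ⟨R, hR1, hR⟩ := key_large hn hmona hdega
    (natDegree_sub_of_monic hmonα hmona hdegα hdega)
  -- for large |ω|, g ω > 1/2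
  have hglarge : ∀ ω : ℝ, R ≤ |ω| → 1 / 2 < g ω := by
    intro ω hω
    have hkey := hR ω hω
    have hapos : 0 < ‖evalI a ω‖ := norm_pos_iff.mpr (hane ω)
    have hz : evalI α ω / evalI a ω - 1 = evalI (α - a) ω / evalI a ω := by
      rw [evalI_sub, sub_div, div_self (hane ω)]
    have hnorm : ‖evalI α ω / evalI a ω - 1‖ < 1 / 2 := by
      rw [hz, norm_div]
      rw [div_lt_iff₀ hapos]
      linarith
    have hre : |(evalI α ω / evalI a ω - 1).re| ≤ ‖evalI α ω / evalI a ω - 1‖ :=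
      Complex.abs_re_le_norm _
    have : (evalI α ω / evalI a ω - 1).re = g ω - 1 := by
      rw [Complex.sub_re, Complex.one_re]
    rw [this] at hre
    have := abs_le.mp hre
    linarith
  -- compact part
  have hK : IsCompact (Set.Icc (-R) R) := isCompact_Icc
  have hne : (Set.Icc (-R) R).Nonempty := ⟨0, by constructor <;> linarith⟩
  obtain ⟨ω₀, hω₀mem, hmin⟩ := hK.exists_isMinOn hne hcf.continuousOn
  obtain ⟨ω₁, hω₁mem, hmax⟩ := hK.exists_isMaxOn hne (continuous_abs.comp hcg).continuousOn
  set M := f ω₀ with hM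
  set N := |g ω₁| with hN
  have hMpos : 0 < M := hwspr ω₀
  have hNpos : 0 ≤ N := abs_nonneg _
  refine ⟨M / (N + 1), by positivity, fun ε hε0 hε1 ω => ?_⟩
  have hval : (evalI (b + Polynomial.C ε * α) ω / evalI a ω).re = f ω + ε * g ω := by
    rw [evalI_add, evalI_C_mul, add_div, mul_div_assoc, Complex.add_re, Complex.re_ofReal_mul]
  rw [hval]
  rcases le_or_gt R |ω| with h | h
  · have h1 := hglarge ω h
    have h2 := hwspr ω
    nlinarith
  · have hωmem : ω ∈ Set.Icc (-R) R := by
      rw [Set.mem_Icc]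
      constructor <;> [linarith [neg_abs_le ω]; linarith [le_abs_self ω]]
    have h1 : M ≤ f ω := hmin hωmem
    have h2 : |g ω| ≤ N := hmax hωmem
    have h3 : ε * (N + 1) < M := by
      rw [← lt_div_iff₀ (by positivity)]
      exact hε1
    have h4 : -|g ω| ≤ g ω := neg_abs_le _
    nlinarith [mul_le_mul_of_nonneg_left h2 hε0.le]
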